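/- Let n, λ, μ, b ∈ ℂ with μ ≠ 0, b ∉ ℤ and b + n ∉ ℤ. For m ≥ 0 let S_m be the 2×2 complex matrix with rows (1 + (λ − n + 2)/((b−m+1)(b−m+n−2)), μ²(b−m+n−1)/((b−m+1)(b−m+n−2)(b−m+n−3))) and (1, 0). Then the infinite products T_m = S_m S_{m+1} ⋯ exist for every m ≥ 0. Set ĉ_m = (T_m)_{21} for m ≥ 0, â_m = ĉ_m μ^m / ((2−n−b)(3−n−b)⋯(2−n−b+m)) (the Pochhammer product of m+1 factors), and a_k = â_{−k} for k ≤ 0. Then the sequence (a_k)_{k≤0} satisfies the Heun recurrence at every k ≤ −1, and the power series ∑_{m≥0} a_{−m} w^m has infinite radius of convergence. -/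

import Mathlib

/-!
Write `S m = !![1 + α m, β m; 1, 0]` with `α m, β m = O(m⁻²)`. As every `S m` has second row
`(1, 0)`, the second row of `S m ⋯ S (m+j+1)` is the first row of `S (m+1) ⋯ S (m+j+1)`, so only
the first row `(p j, q j)` matters; it obeys `p (j+1) = p j (1 + α) + q j`, `q (j+1) = p j β`.
A discrete Grönwall bound makes it bounded uniformly in `m`, so `q j → 0`, the increments of `p`
are summable, and the limit is `T m = !![L m, 0; L (m+1), 0]`. Passing to the limit in
`S m ⋯ = S m * (S (m+1) ⋯)` gives `T m = S m * T (m+1)`, a three-term recurrence for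
`ĉ m = L (m+1)` which becomes the Heun recurrence after rescaling by `μ^m / (2-n-b)_(m+1)`.
Since `ĉ` is bounded, the Pochhammer denominator makes the power series entire.
-/

open Filter Topology Matrix

/-- The ordered partial product `S m * S (m+1) * ⋯ * S (m+n)`. -/
def opProd {A : Type*} [Mul A] (M : ℕ → A) (k : ℕ) : ℕ → A
  | 0 => M k
  | n + 1 => opProd M k n * M (k + n + 1)

/-- The Heun recurrence with parameters `n, λ, μ, b` at index `k`, relating consecutive
coefficients `x = a (k-1)`, `y = a k`, `z = a (k+1)`. -/
def HeunRec (n lam mu b : ℂ) (x y z k : ℂ) : Prop :=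
  ((k + b) * (k + b + n - 1) + lam) * y - mu * (k + b + n - 1) * x + mu * (k + b + 1) * z = 0

open Finset Real Asymptotics

theorem le_mul_exp_sum_of_le_mul_one_add {N e : ℕ → ℝ} (hN : 0 ≤ N 0) (he : ∀ j, 0 ≤ e j)
    (h : ∀ j, N (j + 1) ≤ N j * (1 + e j)) (j : ℕ) :
    N j ≤ N 0 * exp (∑ i ∈ range j, e i) := by
  induction j with
  | zero => simp
  | succ j ih =>
    calc N (j + 1) ≤ N 0 * exp (∑ i ∈ range j, e i) * (1 + e j) :=
          (h j).trans (mul_le_mul_of_nonneg_right ih (by linarith [he j]))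
      _ ≤ N 0 * exp (∑ i ∈ range j, e i) * exp (e j) := by
          gcongr; linarith [add_one_le_exp (e j)]
      _ = N 0 * exp (∑ i ∈ range (j + 1), e i) := by
          rw [sum_range_succ, exp_add, mul_assoc]

section PairRecurrence

variable {E : Type*} [NormedAddCommGroup E] {p q : ℕ → E} {e : ℕ → ℝ}

theorem norm_add_norm_le_of_pair_recurrence (he : ∀ j, 0 ≤ e j)
    (hp : ∀ j, ‖p (j + 1) - p j - q j‖ ≤ e j * ‖p j‖) (hq : ∀ j, ‖q (j + 1)‖ ≤ e j * ‖p j‖)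
    (j : ℕ) : ‖p j‖ + ‖q j‖ ≤ (‖p 0‖ + ‖q 0‖) * exp (2 * ∑ i ∈ range j, e i) := by
  rw [mul_sum]
  refine le_mul_exp_sum_of_le_mul_one_add (N := fun j => ‖p j‖ + ‖q j‖) (by positivity)
    (fun j => by linarith [he j]) (fun j => ?_) j
  have hp' : ‖p (j + 1)‖ ≤ ‖p j‖ + ‖q j‖ + e j * ‖p j‖ := by
    calc ‖p (j + 1)‖ = ‖p j + q j + (p (j + 1) - p j - q j)‖ := by abel_nf
      _ ≤ ‖p j‖ + ‖q j‖ + ‖p (j + 1) - p j - q j‖ := norm_add₃_le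
      _ ≤ _ := by linarith [hp j]
  nlinarith [hq j, he j, norm_nonneg (p j), norm_nonneg (q j)]

theorem tendsto_of_pair_recurrence [CompleteSpace E] (hs : Summable e) (he : ∀ j, 0 ≤ e j)
    (hp : ∀ j, ‖p (j + 1) - p j - q j‖ ≤ e j * ‖p j‖) (hq : ∀ j, ‖q (j + 1)‖ ≤ e j * ‖p j‖) :
    (∃ L, Tendsto p atTop (𝓝 L) ∧ ‖L‖ ≤ (‖p 0‖ + ‖q 0‖) * exp (2 * ∑' i, e i)) ∧
      Tendsto q atTop (𝓝 0) := by
  set C := (‖p 0‖ + ‖q 0‖) * exp (2 * ∑' i, e i)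
  have hbound : ∀ j, ‖p j‖ + ‖q j‖ ≤ C := fun j =>
    (norm_add_norm_le_of_pair_recurrence he hp hq j).trans <| mul_le_mul_of_nonneg_left
      (exp_le_exp.2 (by linarith [hs.sum_le_tsum (range j) fun i _ => he i])) (by positivity)
  have hp_le : ∀ j, ‖p j‖ ≤ C := fun j => by linarith [hbound j, norm_nonneg (q j)]
  have hq_le : ∀ j, ‖q (j + 1)‖ ≤ C * e j := fun j =>
    (hq j).trans (by rw [mul_comm]; exact mul_le_mul_of_nonneg_right (hp_le j) (he j))
  have hq_sum : Summable fun j => ‖q j‖ :=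
    (summable_nat_add_iff 1).1 <| (hs.mul_left C).of_nonneg_of_le (fun _ => norm_nonneg _) hq_le
  have hcauchy : CauchySeq p := by
    refine cauchySeq_of_summable_dist <|
      ((hs.mul_left C).add hq_sum).of_nonneg_of_le (fun _ => dist_nonneg) fun j => ?_
    rw [dist_comm, dist_eq_norm]
    calc ‖p (j + 1) - p j‖ = ‖(p (j + 1) - p j - q j) + q j‖ := by abel_nf
      _ ≤ e j * ‖p j‖ + ‖q j‖ := (norm_add_le _ _).trans (by linarith [hp j])
      _ ≤ C * e j + ‖q j‖ := by nlinarith [hp_le j, he j]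
  obtain ⟨L, hL⟩ := cauchySeq_tendsto_of_complete hcauchy
  refine ⟨⟨L, hL, le_of_tendsto' hL.norm hp_le⟩, ?_⟩
  rw [← tendsto_add_atTop_iff_nat 1]
  refine squeeze_zero_norm hq_le ?_
  simpa using hs.tendsto_atTop_zero.const_mul C

end PairRecurrence

theorem opProd_succ_eq_mul_opProd {A : Type*} [Semigroup A] (M : ℕ → A) (k j : ℕ) :
    opProd M k (j + 1) = M k * opProd M (k + 1) j := by
  induction j with
  | zero => rfl
  | succ j ih =>
    rw [opProd, ih, mul_assoc, opProd]
    congr 3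
    omega

theorem eq_mul_of_tendsto_opProd {A : Type*} [Semigroup A] [TopologicalSpace A] [ContinuousMul A]
    [T2Space A] {M : ℕ → A} {k : ℕ} {x y : A} (hx : Tendsto (opProd M k) atTop (𝓝 x))
    (hy : Tendsto (opProd M (k + 1)) atTop (𝓝 y)) : x = M k * y := by
  refine tendsto_nhds_unique ((tendsto_add_atTop_iff_nat 1).2 hx) ?_
  simpa only [opProd_succ_eq_mul_opProd] using hy.const_mul (M k)

section Companion

variable {α β : ℕ → ℂ} {S : ℕ → Matrix (Fin 2) (Fin 2) ℂ}

theorem opProd_succ_apply_one (hS : ∀ j, S j = !![1 + α j, β j; 1, 0]) (m j : ℕ) (i : Fin 2) :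
    opProd S m (j + 1) 1 i = opProd S (m + 1) j 0 i := by
  simp [opProd_succ_eq_mul_opProd, hS m, Matrix.mul_apply, Fin.sum_univ_two]

theorem opProd_succ_apply_zero_zero (hS : ∀ j, S j = !![1 + α j, β j; 1, 0]) (m j : ℕ) :
    opProd S m (j + 1) 0 0 = opProd S m j 0 0 * (1 + α (m + j + 1)) + opProd S m j 0 1 := by
  simp [opProd, hS (m + j + 1), Matrix.mul_apply, Fin.sum_univ_two]

theorem opProd_succ_apply_zero_one (hS : ∀ j, S j = !![1 + α j, β j; 1, 0]) (m j : ℕ) :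
    opProd S m (j + 1) 0 1 = opProd S m j 0 0 * β (m + j + 1) := by
  simp [opProd, hS (m + j + 1), Matrix.mul_apply, Fin.sum_univ_two]

theorem exists_tendsto_opProd_zero (hS : ∀ j, S j = !![1 + α j, β j; 1, 0])
    (hα : Summable fun j => ‖α j‖) (hβ : Summable fun j => ‖β j‖) (m : ℕ) :
    ∃ L, Tendsto (fun j => opProd S m j 0 0) atTop (𝓝 L) ∧
      ‖L‖ ≤ (1 + ∑' j, (‖α j‖ + ‖β j‖)) * exp (2 * ∑' j, (‖α j‖ + ‖β j‖)) ∧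
      Tendsto (fun j => opProd S m j 0 1) atTop (𝓝 0) := by
  set E : ℕ → ℝ := fun j => ‖α j‖ + ‖β j‖
  have hE : Summable E := hα.add hβ
  have hE0 : ∀ j, 0 ≤ E j := fun j => by positivity
  have hEm : Summable fun j => E (m + j + 1) :=
    ((summable_nat_add_iff (m + 1)).2 hE).congr fun j => congrArg E (by omega)
  obtain ⟨⟨L, hL, hLle⟩, hq⟩ := tendsto_of_pair_recurrence (p := fun j => opProd S m j 0 0)
    (q := fun j => opProd S m j 0 1) hEm (fun j => hE0 _)
    (fun j => calc
      _ = ‖α (m + j + 1)‖ * ‖opProd S m j 0 0‖ := by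
        rw [opProd_succ_apply_zero_zero hS, mul_comm, ← norm_mul]; congr 1; ring
      _ ≤ _ := by gcongr; exact le_add_of_nonneg_right (norm_nonneg _))
    (fun j => by
      rw [opProd_succ_apply_zero_one hS, norm_mul, mul_comm]
      gcongr; exact le_add_of_nonneg_left (norm_nonneg _))
  refine ⟨L, hL, hLle.trans (mul_le_mul ?_ (exp_le_exp.2 ?_) (by positivity)
    (add_nonneg zero_le_one (tsum_nonneg hE0))), hq⟩
  · have h1 : ‖1 + α m‖ ≤ 1 + ‖α m‖ := by simpa using norm_add_le (1 : ℂ) (α m)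
    have hEm_le : E m ≤ ∑' j, E j := hE.le_tsum m fun j _ => hE0 j
    simp only [opProd, hS m, of_apply, cons_val', cons_val_zero, cons_val_one, empty_val',
      cons_val_fin_one]
    linarith
  · have htail : ∑' j, E (m + j + 1) ≤ ∑' j, E j :=
      hEm.tsum_le_tsum_of_inj (fun j => m + j + 1) (fun _ _ h => by simpa using h)
        (fun _ _ => hE0 _) (fun _ => le_rfl) hE
    linarith

theorem exists_tendsto_opProd (hS : ∀ j, S j = !![1 + α j, β j; 1, 0])
    (hα : Summable fun j => ‖α j‖) (hβ : Summable fun j => ‖β j‖) :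
    ∃ T : ℕ → Matrix (Fin 2) (Fin 2) ℂ,
      (∀ m, Tendsto (opProd S m) atTop (𝓝 (T m))) ∧ ∃ K, ∀ m, ‖T m 1 0‖ ≤ K := by
  choose L hL hLK hq using exists_tendsto_opProd_zero hS hα hβ
  refine ⟨fun m => !![L m, 0; L (m + 1), 0], fun m => ?_, _, fun m => by simpa using hLK (m + 1)⟩
  refine tendsto_pi_nhds.2 fun i => tendsto_pi_nhds.2 fun c => ?_
  fin_cases i <;> fin_cases c
  · simpa using hL m
  · simpa using hq m
  · rw [← tendsto_add_atTop_iff_nat 1]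
    simpa [opProd_succ_apply_one hS] using hL (m + 1)
  · rw [← tendsto_add_atTop_iff_nat 1]
    simpa [opProd_succ_apply_one hS] using hq (m + 1)

theorem apply_one_zero_eq_of_eq_mul (hS : ∀ j, S j = !![1 + α j, β j; 1, 0])
    {T : ℕ → Matrix (Fin 2) (Fin 2) ℂ} (hT : ∀ m, T m = S m * T (m + 1)) (m : ℕ) :
    T m 1 0 = (1 + α (m + 1)) * T (m + 1) 1 0 + β (m + 1) * T (m + 2) 1 0 := by
  have hrow : ∀ m i, T m 1 i = T (m + 1) 0 i := fun m i => by
    rw [hT m]; simp [hS m, mul_apply, Fin.sum_univ_two]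
  rw [hrow m 0, hT (m + 1)]
  simp [hS (m + 1), mul_apply, Fin.sum_univ_two]

end Companion

theorem isEquivalent_sub_natCast (a : ℂ) : (fun j : ℕ => a - j) ~[atTop] fun j => -(j : ℂ) := by
  refine (isLittleO_const_left (c := a).2 (Or.inr ?_)).congr_left fun j => by simp
  simpa [Function.comp_def] using tendsto_natCast_atTop_atTop

theorem summable_norm_of_isEquivalent_div_sq {f : ℕ → ℂ} {c : ℂ}
    (h : f ~[atTop] fun j => c / (j : ℂ) ^ 2) : Summable fun j => ‖f j‖ := by
  refine summable_of_isBigO_nat ?_ h.isBigO.norm_left.norm_right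
  simpa [div_eq_mul_inv] using (Real.summable_nat_pow_inv.2 one_lt_two).mul_left ‖c‖

theorem summable_norm_div_mul_sub_natCast (c a₁ a₂ : ℂ) :
    Summable fun j : ℕ => ‖c / ((a₁ - j) * (a₂ - j))‖ := by
  refine summable_norm_of_isEquivalent_div_sq (c := c) ?_
  refine ((IsEquivalent.refl (u := fun _ => c)).div
    ((isEquivalent_sub_natCast a₁).mul (isEquivalent_sub_natCast a₂))).congr_right ?_
  exact Eventually.of_forall fun j => by simp [sq]

theorem summable_norm_mul_sub_natCast_div (c a₀ a₁ a₂ a₃ : ℂ) :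
    Summable fun j : ℕ => ‖c * (a₀ - j) / ((a₁ - j) * (a₂ - j) * (a₃ - j))‖ := by
  refine summable_norm_of_isEquivalent_div_sq (c := c) ?_
  refine ((IsEquivalent.refl (u := fun _ => c)).mul (isEquivalent_sub_natCast a₀) |>.div
    (((isEquivalent_sub_natCast a₁).mul (isEquivalent_sub_natCast a₂)).mul
      (isEquivalent_sub_natCast a₃))).congr_right ?_
  filter_upwards [eventually_ne_atTop 0] with j hj
  have : (j : ℂ) ≠ 0 := Nat.cast_ne_zero.2 hj
  simp only [Pi.mul_apply, Pi.div_apply]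
  field_simp

noncomputable def heunAlpha (n lam b : ℂ) (m : ℕ) : ℂ :=
  (lam - n + 2) / ((b - m + 1) * (b - m + n - 2))

noncomputable def heunBeta (n mu b : ℂ) (m : ℕ) : ℂ :=
  mu ^ 2 * (b - m + n - 1) / ((b - m + 1) * (b - m + n - 2) * (b - m + n - 3))

theorem summable_norm_heunAlpha (n lam b : ℂ) : Summable fun m => ‖heunAlpha n lam b m‖ :=
  (summable_norm_div_mul_sub_natCast (lam - n + 2) (b + 1) (b + n - 2)).congr fun m => by
    rw [heunAlpha]; ring_nf

theorem summable_norm_heunBeta (n mu b : ℂ) : Summable fun m => ‖heunBeta n mu b m‖ :=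
  (summable_norm_mul_sub_natCast_div (mu ^ 2) (b + n - 1) (b + 1) (b + n - 2) (b + n - 3)).congr
    fun m => by rw [heunBeta]; ring_nf

theorem summable_norm_pow_div_prod_add_natCast {c : ℂ} (hc : ∀ j : ℕ, c + j ≠ 0) (z : ℂ) :
    Summable fun m : ℕ => ‖z ^ m / ∏ j ∈ range (m + 1), (c + j)‖ := by
  have hgrow : Tendsto (fun m : ℕ => ‖c + (m + 1 : ℕ)‖) atTop atTop := by
    refine tendsto_atTop_mono (fun m => ?_) (tendsto_atTop_add_const_right _ (-‖c‖)
      (tendsto_natCast_atTop_atTop.comp (tendsto_add_atTop_nat 1)))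
    have h := norm_sub_norm_le ((m + 1 : ℕ) : ℂ) (-c)
    rw [Complex.norm_natCast, norm_neg, sub_neg_eq_add, add_comm ((m + 1 : ℕ) : ℂ)] at h
    show ((m + 1 : ℕ) : ℝ) + -‖c‖ ≤ _
    linarith
  refine summable_of_ratio_norm_eventually_le one_half_lt_one ?_
  filter_upwards [hgrow.eventually_ge_atTop (2 * ‖z‖)] with m hm
  have hpos : 0 < ‖c + (m + 1 : ℕ)‖ := norm_pos_iff.2 (hc _)
  rw [norm_norm, norm_norm, prod_range_succ _ (m + 1), pow_succ, mul_div_mul_comm, norm_mul,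
    mul_comm]
  gcongr
  rw [norm_div, div_le_iff₀ hpos]
  linarith

theorem heunRec_of_three_term_recurrence {n lam mu b : ℂ} {c : ℕ → ℂ} (m : ℕ) (hbm : b ≠ m)
    (hd : ∀ j : ℕ, 2 - n - b + j ≠ 0)
    (hc : c m = (1 + heunAlpha n lam b (m + 1)) * c (m + 1) + heunBeta n mu b (m + 1) * c (m + 2)) :
    HeunRec n lam mu b (c (m + 2) * mu ^ (m + 2) / ∏ j ∈ range (m + 2 + 1), (2 - n - b + j))
      (c (m + 1) * mu ^ (m + 1) / ∏ j ∈ range (m + 1 + 1), (2 - n - b + j))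
      (c m * mu ^ m / ∏ j ∈ range (m + 1), (2 - n - b + j)) (-(m : ℂ) - 1) := by
  have hP := prod_ne_zero_iff.2 fun j (_ : j ∈ range (m + 1)) => hd j
  have hd1 : 2 - n - b + ((m : ℂ) + 1) ≠ 0 := by exact_mod_cast hd (m + 1)
  have hd2 : 2 - n - b + ((m : ℂ) + 2) ≠ 0 := by exact_mod_cast hd (m + 2)
  have hpoly : (b - m) * (b - m + n - 3) * (b - m + n - 4) * c m =
      ((b - m) * (b - m + n - 3) + (lam - n + 2)) * (b - m + n - 4) * c (m + 1) +
        mu ^ 2 * (b - m + n - 2) * c (m + 2) := by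
    have h1 : b - ((m : ℂ) + 1) + 1 ≠ 0 := fun h => hbm (by linear_combination h)
    have h2 : b - ((m : ℂ) + 1) + n - 2 ≠ 0 := fun h => hd1 (by linear_combination -h)
    have h3 : b - ((m : ℂ) + 1) + n - 3 ≠ 0 := fun h => hd2 (by linear_combination -h)
    rw [hc, heunAlpha, heunBeta]
    push_cast
    field_simp
    ring
  unfold HeunRec
  rw [prod_range_succ _ (m + 2), prod_range_succ _ (m + 1)]
  push_cast
  field_simp
  linear_combination mu ^ (m + 1) * hpoly

theorem heun_backward_solution_formula_general
    (n lam mu b : ℂ)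
    (hb : ∀ m : ℤ, b ≠ (m : ℂ)) (hbn : ∀ m : ℤ, b + n ≠ (m : ℂ))
    (S : ℕ → Matrix (Fin 2) (Fin 2) ℂ)
    (hS : ∀ m : ℕ,
      S m = !![1 + (lam - n + 2) / ((b - (m : ℂ) + 1) * (b - (m : ℂ) + n - 2)),
               mu ^ 2 * (b - (m : ℂ) + n - 1) /
                 ((b - (m : ℂ) + 1) * (b - (m : ℂ) + n - 2) * (b - (m : ℂ) + n - 3));
               1, 0]) :
    ∃ T : ℕ → Matrix (Fin 2) (Fin 2) ℂ,
      (∀ m : ℕ, Tendsto (fun j => opProd S m j) atTop (nhds (T m))) ∧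
      ∀ ah : ℕ → ℂ,
        (∀ m : ℕ,
          ah m = T m 1 0 * mu ^ m / ∏ j ∈ Finset.range (m + 1), (2 - n - b + (j : ℂ))) →
        (∀ m : ℕ, HeunRec n lam mu b (ah (m + 2)) (ah (m + 1)) (ah m) (-(m : ℂ) - 1)) ∧
        (∀ w : ℂ, Summable fun m : ℕ => ah m * w ^ m) := by
  have hS' : ∀ m, S m = !![1 + heunAlpha n lam b m, heunBeta n mu b m; 1, 0] := hS
  obtain ⟨T, hT, K, hK⟩ :=
    exists_tendsto_opProd hS' (summable_norm_heunAlpha n lam b) (summable_norm_heunBeta n mu b)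
  have hd : ∀ j : ℕ, 2 - n - b + j ≠ 0 := fun j h =>
    hbn (j + 2) (by push_cast; linear_combination -h)
  refine ⟨T, hT, fun ah hah => ⟨fun m => ?_, fun w => ?_⟩⟩
  · rw [hah, hah, hah]
    exact heunRec_of_three_term_recurrence (c := fun k => T k 1 0) m (by exact_mod_cast hb m) hd
      (apply_one_zero_eq_of_eq_mul hS' (fun k => eq_mul_of_tendsto_opProd (hT k) (hT (k + 1))) m)
  · refine Summable.of_norm_bounded
      ((summable_norm_pow_div_prod_add_natCast hd (mu * w)).mul_left K) fun m => ?_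
    rw [hah, mul_pow, div_mul_eq_mul_div, mul_assoc, mul_div_assoc, mul_div_assoc, norm_mul]
    exact mul_le_mul_of_nonneg_right (hK m) (norm_nonneg _)

/-- Explicit backward solution via infinite matrix products: for `μ ≠ 0`, `b, b+n ∉ ℤ` and
`S m = !![1 + (λ-n+2)/((b-m+1)(b-m+n-2)), μ²(b-m+n-1)/((b-m+1)(b-m+n-2)(b-m+n-3)); 1, 0]`,
the infinite products `T m = S m * S (m+1) * ⋯` exist; setting `ĉ m = (T m)₂₁`,
`â m = ĉ m μ^m / ((2-n-b)(3-n-b)⋯(2-n-b+m))` and `a k = â (-k)` for `k ≤ 0`, the sequence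
`(a k)_{k ≤ 0}` satisfies the Heun recurrence at every `k ≤ -1`, and `∑_{m ≥ 0} a_{-m} w^m`
converges everywhere. -/
theorem heun_backward_solution_formula
    (n lam mu b : ℂ) (hmu : mu ≠ 0)
    (hb : ∀ m : ℤ, b ≠ (m : ℂ)) (hbn : ∀ m : ℤ, b + n ≠ (m : ℂ))
    (S : ℕ → Matrix (Fin 2) (Fin 2) ℂ)
    (hS : ∀ m : ℕ,
      S m = !![1 + (lam - n + 2) / ((b - (m : ℂ) + 1) * (b - (m : ℂ) + n - 2)),
               mu ^ 2 * (b - (m : ℂ) + n - 1) /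
                 ((b - (m : ℂ) + 1) * (b - (m : ℂ) + n - 2) * (b - (m : ℂ) + n - 3));
               1, 0]) :
    ∃ T : ℕ → Matrix (Fin 2) (Fin 2) ℂ,
      (∀ m : ℕ, Tendsto (fun j => opProd S m j) atTop (nhds (T m))) ∧
      ∀ ah : ℕ → ℂ,
        (∀ m : ℕ,
          ah m = T m 1 0 * mu ^ m / ∏ j ∈ Finset.range (m + 1), (2 - n - b + (j : ℂ))) →
        (∀ m : ℕ, HeunRec n lam mu b (ah (m + 2)) (ah (m + 1)) (ah m) (-(m : ℂ) - 1)) ∧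
        (∀ w : ℂ, Summable fun m : ℕ => ah m * w ^ m) :=
  heun_backward_solution_formula_general n lam mu b hb hbn S hS
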